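/- Let n ≥ 7, k ≥ 2, c > 0, and α_j = (1/2)((n−2)/(n−6))^{j−1} − 1/2 for j = 1,…,k (so α₁ = 0). There exist positive constants β₁,…,β_k with β₁ = 1 such that the functions μ_{0j}(t) = β_j t^{−α_j} satisfy μ_{01}(t) = 1 and, for every j = 2,…,k and every t > 0, μ_{0j}(t)·μ̇_{0j}(t) = −c (μ_{0j}(t)/μ_{0,j−1}(t))^{(n−2)/2}. -/
import Mathlib


open Real Filter Set

noncomputable section

/-- `α_j = (1/2)((n-2)/(n-6))^{j-1} - 1/2` (1-based index `j`). -/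
def alphaE (n j : ℕ) : ℝ := (1 / 2) * (((n : ℝ) - 2) / ((n : ℝ) - 6)) ^ (j - 1) - 1 / 2

/-- `μ_{0j}(t) = β_j t^{-α_j}`. -/
def mu0 (n : ℕ) (b : ℕ → ℝ) (j : ℕ) (t : ℝ) : ℝ := b j * t ^ (-(alphaE n j))

lemma hr_gt (n : ℕ) (hn : 7 ≤ n) : 1 < ((n:ℝ)-2)/((n:ℝ)-6) := by
  have h7 : (7:ℝ) ≤ (n:ℝ) := by exact_mod_cast hn
  rw [lt_div_iff₀ (by linarith)]
  linarith

lemma alphaE_pos (n j : ℕ) (hn : 7 ≤ n) (hj : 2 ≤ j) : 0 < alphaE n j := by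
  have h := hr_gt n hn
  have h2 : 1 < (((n:ℝ)-2)/((n:ℝ)-6)) ^ (j-1) := one_lt_pow₀ h (by omega)
  unfold alphaE; linarith

noncomputable def bE (n : ℕ) (c : ℝ) : ℕ → ℝ
  | 0 => 1
  | 1 => 1
  | (m+2) => ((c / alphaE n (m+2)) * (bE n c (m+1)) ^ (-(((n:ℝ)-2)/2))) ^ ((2 - ((n:ℝ)-2)/2)⁻¹)

lemma bE_pos (n : ℕ) (hn : 7 ≤ n) (c : ℝ) (hc : 0 < c) : ∀ j, 0 < bE n c j
  | 0 => by simp [bE]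
  | 1 => by simp [bE]
  | (m+2) => by
    have hB := bE_pos n hn c hc (m+1)
    have hα := alphaE_pos n (m+2) hn (by omega)
    simp only [bE]
    exact Real.rpow_pos_of_pos (mul_pos (div_pos hc hα) (Real.rpow_pos_of_pos hB _)) _

lemma p_gt (n : ℕ) (hn : 7 ≤ n) : (2:ℝ) < ((n:ℝ)-2)/2 := by
  have h7 : (7:ℝ) ≤ (n:ℝ) := by exact_mod_cast hn
  linarith

/-- coefficient identity -/
lemma bE_key (n : ℕ) (hn : 7 ≤ n) (c : ℝ) (hc : 0 < c) (m : ℕ) :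
    c * (bE n c (m+2) / bE n c (m+1)) ^ (((n:ℝ)-2)/2)
      = alphaE n (m+2) * (bE n c (m+2) * bE n c (m+2)) := by
  set p : ℝ := ((n:ℝ)-2)/2 with hp
  have hα := alphaE_pos n (m+2) hn (by omega)
  have hA := bE_pos n hn c hc (m+2)
  have hB := bE_pos n hn c hc (m+1)
  set A := bE n c (m+2)
  set B := bE n c (m+1)
  have hp2 : (2:ℝ) - p ≠ 0 := by have := p_gt n hn; rw [← hp] at this; linarith
  have hX : 0 < (c / alphaE n (m+2)) * B ^ (-p) :=
    mul_pos (div_pos hc hα) (Real.rpow_pos_of_pos hB _)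
  have hAdef : A = ((c / alphaE n (m+2)) * B ^ (-p)) ^ ((2 - p)⁻¹) := rfl
  have hA2p : A ^ ((2:ℝ) - p) = (c / alphaE n (m+2)) * B ^ (-p) := by
    rw [hAdef, ← Real.rpow_mul hX.le, inv_mul_cancel₀ hp2, Real.rpow_one]
  have h1 : (A/B)^p = A^p * B^(-p) := by
    rw [Real.div_rpow hA.le hB.le, Real.rpow_neg hB.le, div_eq_mul_inv]
  have h2 : A ^ ((2:ℝ)-p) * A ^ p = A * A := by
    rw [← Real.rpow_add hA, sub_add_cancel,
      show (2:ℝ) = ((2:ℕ):ℝ) by norm_num, Real.rpow_natCast]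
    ring
  rw [h1, ← h2, hA2p]
  field_simp

/-- exponent identity -/
lemma exp_key (n : ℕ) (hn : 7 ≤ n) (m : ℕ) :
    -alphaE n (m+2) + (-alphaE n (m+2) - 1)
      = (-(alphaE n (m+2)) - -(alphaE n (m+1))) * (((n:ℝ)-2)/2) := by
  have h7 : (7:ℝ) ≤ (n:ℝ) := by exact_mod_cast hn
  have h6 : (n:ℝ) - 6 ≠ 0 := by linarith
  unfold alphaE
  simp only [show m+2-1 = m+1 from rfl, show m+1-1 = m from rfl]
  rw [pow_succ]
  field_simp
  ring

/-- The explicit power functions `μ_{0j}(t) = β_j t^{-α_j}` solve the ODE system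
`μ₁ = 1`, `μ_j μ̇_j = -c (μ_j/μ_{j-1})^{(n-2)/2}` for suitable `β_j > 0`. -/
theorem mu0_solves_ode (n k : ℕ) (hn : 7 ≤ n) (hk : 2 ≤ k) (c : ℝ) (hc : 0 < c) :
    ∃ b : ℕ → ℝ, b 1 = 1 ∧ (∀ j ∈ Finset.Icc 1 k, 0 < b j) ∧
      (∀ t : ℝ, 0 < t → mu0 n b 1 t = 1) ∧
      (∀ j ∈ Finset.Icc 2 k, ∀ t : ℝ, 0 < t →
        ∃ d : ℝ, HasDerivAt (mu0 n b j) d t ∧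
          mu0 n b j t * d = -c * (mu0 n b j t / mu0 n b (j - 1) t) ^ (((n : ℝ) - 2) / 2)) := by
  refine ⟨bE n c, rfl, fun j _ => bE_pos n hn c hc j, ?_, ?_⟩
  · intro t ht
    simp [mu0, alphaE, bE, Real.rpow_zero]
  · intro j hj t ht
    simp only [Finset.mem_Icc] at hj
    obtain ⟨m, rfl⟩ : ∃ m, j = m + 2 := ⟨j - 2, by omega⟩
    set α := alphaE n (m+2) with hαdef
    set A := bE n c (m+2) with hAdef
    set B := bE n c (m+1) with hBdef
    have hA := bE_pos n hn c hc (m+2)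
    have hB := bE_pos n hn c hc (m+1)
    refine ⟨A * (-α * t ^ (-α - 1)), ?_, ?_⟩
    · have h := (Real.hasDerivAt_rpow_const (p := -α) (Or.inl ht.ne')).const_mul A
      exact h
    · have hj1 : (m + 2) - 1 = m + 1 := rfl
      simp only [mu0, hj1]
      rw [show A * t ^ (-α) * (A * (-α * t ^ (-α - 1))) =
        -(α * (A * A)) * (t ^ (-α) * t ^ (-α - 1)) by ring,
        ← Real.rpow_add ht]
      have hdiv : A * t ^ (-α) / (B * t ^ (-(alphaE n (m+1))))
          = (A / B) * t ^ (-α - -(alphaE n (m+1))) := by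
        rw [Real.rpow_sub ht]
        field_simp
      rw [hdiv, Real.mul_rpow (div_pos hA hB).le (Real.rpow_pos_of_pos ht _).le,
        ← Real.rpow_mul ht.le, ← exp_key n hn m, ← bE_key n hn c hc m]
      ring
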